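/- Let K be a field of characteristic 0, σ the K-algebra automorphism of K(X) with σ(f)(X) = f(X+1), B a vector space of finite dimension r ≥ 1 over K(X), and S : B → B an additive map satisfying S(f•v) = σ(f)•S(v) for all f ∈ K(X), v ∈ B. Let (e_1,…,e_r) be a basis of B over K(X) and A_0 ∈ K(X)^{r×r} the matrix with S(e_i) = ∑_{j=1}^r (A_0)_{ij} • e_j. If A_0 is invertible, then there exist polynomials a_1,…,a_r ∈ ℤ[X], each of degree at most r−1 and with all coefficients in {0,1,…,r}, such that v = ∑_{i=1}^r a_i • e_i (the a_i viewed in K(X) via the embedding of ℚ into K) is a cyclic vector: (v, S(v), …, S^{r−1}(v)) is a basis of B over K(X). -/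

import Mathlib

open Polynomial Matrix

namespace CyclicVectorAux

/-- A nonzero multivariate polynomial whose degree in each variable is less than the size of
a finite grid `s` has a nonvanishing point on the grid. -/
lemma grid_fin {F : Type*} [CommRing F] [IsDomain F] (s : Finset F) :
    ∀ (n : ℕ) (P : MvPolynomial (Fin n) F), P ≠ 0 →
      (∀ v, MvPolynomial.degreeOf v P < s.card) →
      ∃ x : Fin n → F, (∀ v, x v ∈ s) ∧ MvPolynomial.eval x P ≠ 0 := by
  classical
  intro n
  induction n with
  | zero =>
    intro P hP _
    obtain ⟨b, rfl⟩ := MvPolynomial.C_surjective (Fin 0) P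
    exact ⟨Fin.elim0, fun v => v.elim0, by simpa using hP⟩
  | succ n ih =>
    intro P hP hd
    set Q := MvPolynomial.finSuccEquiv F n P with hQdef
    have hQ0 : Q ≠ 0 := by
      intro h
      apply hP
      have := (MvPolynomial.finSuccEquiv F n).injective (a₁ := P) (a₂ := 0)
      simp only [map_zero] at this
      exact this (by rw [← hQdef, h])
    set m := Q.natDegree with hm
    have hcoeff : Q.coeff m ≠ 0 := by
      rw [hm, ← Polynomial.leadingCoeff]
      exact Polynomial.leadingCoeff_ne_zero.mpr hQ0
    obtain ⟨x, hxs, hx⟩ := ih (Q.coeff m) hcoeff (fun j =>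
      lt_of_le_of_lt (MvPolynomial.degreeOf_coeff_finSuccEquiv P j m) (hd j.succ))
    set q : Polynomial F := Q.map (MvPolynomial.eval x) with hq
    have hq0 : q ≠ 0 := by
      intro h
      apply hx
      have : q.coeff m = 0 := by rw [h]; simp
      rwa [hq, Polynomial.coeff_map] at this
    have hqdeg : q.natDegree < s.card := by
      refine lt_of_le_of_lt Polynomial.natDegree_map_le ?_
      rw [← hm] at *
      calc Q.natDegree = MvPolynomial.degreeOf 0 P := MvPolynomial.natDegree_finSuccEquiv P
      _ < s.card := hd 0
    have hy : ∃ y ∈ s, ¬ q.IsRoot y := by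
      by_contra h
      push_neg at h
      have hsub : s ⊆ q.roots.toFinset := by
        intro y hys
        rw [Multiset.mem_toFinset, Polynomial.mem_roots hq0]
        exact h y hys
      have := (Finset.card_le_card hsub).trans
        ((Multiset.toFinset_card_le _).trans (Polynomial.card_roots' q))
      omega
    obtain ⟨y, hys, hyroot⟩ := hy
    refine ⟨Fin.cons y x, ?_, ?_⟩
    · intro v
      refine Fin.cases ?_ ?_ v
      · simpa using hys
      · intro i; simpa using hxs i
    · rw [MvPolynomial.eval_eq_eval_mv_eval']
      exact hyroot

lemma grid_prod {F : Type*} [CommRing F] [IsDomain F] (s : Finset F) (r : ℕ)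
    (P : MvPolynomial (Fin r × Fin r) F) (hP : P ≠ 0)
    (hd : ∀ v, MvPolynomial.degreeOf v P < s.card) :
    ∃ x : Fin r × Fin r → F, (∀ v, x v ∈ s) ∧ MvPolynomial.eval x P ≠ 0 := by
  set eq := finProdFinEquiv (m := r) (n := r) with heq
  have hren : MvPolynomial.rename eq P ≠ 0 := by
    intro h
    exact hP (MvPolynomial.rename_injective _ eq.injective (by simpa using h))
  have hdd : ∀ v, MvPolynomial.degreeOf v (MvPolynomial.rename eq P) < s.card := by
    intro v
    have h2 := MvPolynomial.degreeOf_rename_of_injective (p := P) (f := eq)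
      eq.injective (eq.symm v)
    rw [Equiv.apply_symm_apply] at h2
    rw [h2]
    exact hd _
  obtain ⟨x, hxs, hx⟩ := grid_fin s (r * r) (MvPolynomial.rename eq P) hren hdd
  exact ⟨x ∘ eq, fun v => hxs _, by rwa [MvPolynomial.eval_rename] at hx⟩

variable {K : Type*} [Field K]

/-- The matrix of `S^[j]` in the basis `e`. -/
noncomputable def Amat (σ : RatFunc K ≃ₐ[K] RatFunc K) {r : ℕ}
    (A0 : Matrix (Fin r) (Fin r) (RatFunc K)) : ℕ → Matrix (Fin r) (Fin r) (RatFunc K)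
  | 0 => 1
  | (j+1) => A0.map (σ ^ j : RatFunc K ≃ₐ[K] RatFunc K) * Amat σ A0 j

lemma Amat_det (σ : RatFunc K ≃ₐ[K] RatFunc K) {r : ℕ}
    (A0 : Matrix (Fin r) (Fin r) (RatFunc K)) (hinv : IsUnit A0.det) :
    ∀ j, IsUnit (Amat σ A0 j).det := by
  intro j
  induction j with
  | zero => simp [Amat]
  | succ j ih =>
    rw [Amat, Matrix.det_mul]
    refine IsUnit.mul ?_ ih
    have h1 : (A0.map (σ ^ j : RatFunc K ≃ₐ[K] RatFunc K)).det
        = ((σ ^ j : RatFunc K ≃ₐ[K] RatFunc K) : RatFunc K →+* RatFunc K) A0.det := by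
      rw [RingHom.map_det]
      rfl
    rw [h1]
    exact hinv.map _

lemma sigma_pow_X (σ : RatFunc K ≃ₐ[K] RatFunc K) (hσ : σ RatFunc.X = RatFunc.X + 1) :
    ∀ j : ℕ, (σ ^ j : RatFunc K ≃ₐ[K] RatFunc K) RatFunc.X = RatFunc.X + (j : RatFunc K) := by
  intro j
  induction j with
  | zero => simp
  | succ j ih =>
    rw [pow_succ, AlgEquiv.mul_apply, hσ, map_add, _root_.map_one, ih]
    push_cast
    ring

lemma sigma_pow_aeval (σ : RatFunc K ≃ₐ[K] RatFunc K) (hσ : σ RatFunc.X = RatFunc.X + 1)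
    (j : ℕ) (p : Polynomial K) :
    (σ ^ j : RatFunc K ≃ₐ[K] RatFunc K) (Polynomial.aeval RatFunc.X p)
      = Polynomial.aeval (RatFunc.X + (j : RatFunc K)) p := by
  rw [← sigma_pow_X σ hσ j, ← Polynomial.aeval_algHom_apply]

lemma iter_formula (σ : RatFunc K ≃ₐ[K] RatFunc K) {r : ℕ}
    (A0 : Matrix (Fin r) (Fin r) (RatFunc K))
    {B : Type*} [AddCommGroup B] [Module (RatFunc K) B]
    (S : B → B)
    (hS_add : ∀ x y : B, S (x + y) = S x + S y)
    (hS_smul : ∀ (f : RatFunc K) (w : B), S (f • w) = σ f • S w)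
    (e : Module.Basis (Fin r) (RatFunc K) B)
    (hA0 : ∀ i, S (e i) = ∑ j, A0 i j • e j) :
    ∀ (j : ℕ) (g : Fin r → RatFunc K),
      S^[j] (∑ i, g i • e i)
        = ∑ l, (∑ i, (σ ^ j : RatFunc K ≃ₐ[K] RatFunc K) (g i) * Amat σ A0 j i l) • e l := by
  have hSsum : ∀ {ι : Type} (t : Finset ι) (f : ι → B), S (∑ i ∈ t, f i) = ∑ i ∈ t, S (f i) := by
    intro ι t f
    exact map_sum (AddMonoidHom.mk' S hS_add) f t
  intro j
  induction j with
  | zero =>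
    intro g
    simp only [Function.iterate_zero, id_eq, pow_zero, AlgEquiv.one_apply, Amat,
      Matrix.one_apply]
    simp [mul_ite, mul_one, mul_zero, Finset.sum_ite_eq']
  | succ j ih =>
    intro g
    rw [Function.iterate_succ_apply]
    have hSv : S (∑ i, g i • e i) = ∑ l, (∑ i, σ (g i) * A0 i l) • e l := by
      rw [hSsum]
      simp only [hS_smul, hA0]
      simp_rw [Finset.smul_sum, smul_smul, Finset.sum_smul]
      exact Finset.sum_comm
    rw [hSv, ih]
    refine Finset.sum_congr rfl (fun l _ => ?_)
    congr 1
    simp only [map_sum, _root_.map_mul, Finset.sum_mul, Amat, Matrix.mul_apply, Matrix.map_apply,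
      Finset.mul_sum, pow_succ, AlgEquiv.mul_apply]
    rw [Finset.sum_comm]
    refine Finset.sum_congr rfl fun i _ => Finset.sum_congr rfl fun m _ => by ring

end CyclicVectorAux

open CyclicVectorAux in
/-- Existence of a cyclic vector (Hendriks–Singer). -/
theorem cyclic_vector_exists (K : Type*) [Field K] [CharZero K]
    (σ : RatFunc K ≃ₐ[K] RatFunc K) (hσ : σ RatFunc.X = RatFunc.X + 1)
    (B : Type*) [AddCommGroup B] [Module (RatFunc K) B]
    (S : B → B)
    (hS_add : ∀ x y : B, S (x + y) = S x + S y)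
    (hS_smul : ∀ (f : RatFunc K) (w : B), S (f • w) = σ f • S w)
    (r : ℕ) (hr : 1 ≤ r)
    (e : Module.Basis (Fin r) (RatFunc K) B)
    (A0 : Matrix (Fin r) (Fin r) (RatFunc K))
    (hA0 : ∀ i, S (e i) = ∑ j, A0 i j • e j)
    (hinv : IsUnit A0.det) :
    ∃ a : Fin r → Polynomial ℤ,
      (∀ i, (a i).natDegree ≤ r - 1) ∧
      (∀ i k, (a i).coeff k ∈ Set.Icc (0 : ℤ) (r : ℤ)) ∧
      ∃ v : B,
        v = ∑ i, (algebraMap (Polynomial K) (RatFunc K)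
              ((a i).map (Int.castRingHom K))) • e i ∧
        LinearIndependent (RatFunc K) (fun i : Fin r => S^[(i : ℕ)] v) ∧
        Submodule.span (RatFunc K) (Set.range fun i : Fin r => S^[(i : ℕ)] v) = ⊤ := by
  classical
  haveI : CharZero (RatFunc K) :=
    charZero_of_injective_algebraMap (algebraMap K (RatFunc K)).injective
  -- the Vandermonde matrix at the shifted points X, X+1, ..., X+r-1
  set V : Matrix (Fin r) (Fin r) (RatFunc K) :=
    Matrix.vandermonde (fun j : Fin r => RatFunc.X + ((j : ℕ) : RatFunc K)) with hVdef
  have hV : IsUnit V.det := by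
    rw [isUnit_iff_ne_zero, hVdef, Matrix.det_vandermonde_ne_zero_iff]
    intro i j hij
    have : ((i : ℕ) : RatFunc K) = ((j : ℕ) : RatFunc K) := by
      have := hij
      simpa using this
    exact Fin.ext (Nat.cast_injective this)
  -- the determinant polynomial
  set Nmat : Matrix (Fin r) (Fin r) (MvPolynomial (Fin r × Fin r) (RatFunc K)) :=
    Matrix.of fun j l => ∑ i, (∑ k, MvPolynomial.C (V j k) * MvPolynomial.X (i, k)) *
      MvPolynomial.C (Amat σ A0 (j : ℕ) i l) with hNdef
  set D : MvPolynomial (Fin r × Fin r) (RatFunc K) := Nmat.det with hDdef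
  -- evaluation of D
  have hevalD : ∀ x : Fin r × Fin r → RatFunc K,
      MvPolynomial.eval x D = Matrix.det (Matrix.of fun j l : Fin r =>
        ∑ i, (∑ k, V j k * x (i, k)) * Amat σ A0 (j : ℕ) i l) := by
    intro x
    rw [hDdef, RingHom.map_det]
    congr 1
    ext j l
    simp [hNdef, Matrix.map_apply, map_sum, _root_.map_mul]
  -- D is nonzero: witness point
  set W : Matrix (Fin r) (Fin r) (RatFunc K) :=
    Matrix.of fun j i => (Amat σ A0 (j : ℕ))⁻¹ j i with hWdef
  set y : Fin r × Fin r → RatFunc K := fun p => (V⁻¹ * W) p.2 p.1 with hydef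
  have hyW : ∀ j i : Fin r, (∑ k, V j k * y (i, k)) = W j i := by
    intro j i
    have h1 : V * (V⁻¹ * W) = W := Matrix.mul_nonsing_inv_cancel_left V W hV
    have h2 := congrFun (congrFun h1 j) i
    rw [Matrix.mul_apply] at h2
    simpa [hydef] using h2
  have hevalDy : MvPolynomial.eval y D = 1 := by
    rw [hevalD y]
    have hone : (Matrix.of fun j l : Fin r =>
        ∑ i, (∑ k, V j k * y (i, k)) * Amat σ A0 (j : ℕ) i l)
          = (1 : Matrix (Fin r) (Fin r) (RatFunc K)) := by
      ext j l
      simp only [Matrix.of_apply, hyW]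
      have h2 : (Amat σ A0 (j : ℕ))⁻¹ * Amat σ A0 (j : ℕ) = 1 :=
        Matrix.nonsing_inv_mul _ (Amat_det σ A0 hinv (j : ℕ))
      calc ∑ i, W j i * Amat σ A0 (j : ℕ) i l
          = ((Amat σ A0 (j : ℕ))⁻¹ * Amat σ A0 (j : ℕ)) j l := by
            rw [Matrix.mul_apply]
            exact Finset.sum_congr rfl fun i _ => by rw [hWdef]; rfl
        _ = (1 : Matrix (Fin r) (Fin r) (RatFunc K)) j l := by rw [h2]
    rw [hone, Matrix.det_one]
  have hD0 : D ≠ 0 := by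
    intro h
    rw [h, map_zero] at hevalDy
    exact zero_ne_one hevalDy
  -- degree bound
  have hdeg : ∀ v, MvPolynomial.degreeOf v D ≤ r := by
    have hentry : ∀ j l, MvPolynomial.totalDegree (Nmat j l) ≤ 1 := by
      intro j l
      simp only [hNdef, Matrix.of_apply]
      refine (MvPolynomial.totalDegree_finset_sum _ _).trans
        (Finset.sup_le fun i _ => ?_)
      refine (MvPolynomial.totalDegree_mul _ _).trans ?_
      rw [MvPolynomial.totalDegree_C, add_zero]
      refine (MvPolynomial.totalDegree_finset_sum _ _).trans
        (Finset.sup_le fun k _ => ?_)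
      refine (MvPolynomial.totalDegree_mul _ _).trans ?_
      rw [MvPolynomial.totalDegree_C, MvPolynomial.totalDegree_X]
    intro v
    refine (MvPolynomial.degreeOf_le_totalDegree _ _).trans ?_
    rw [hDdef, Matrix.det_apply]
    refine (MvPolynomial.totalDegree_finset_sum _ _).trans (Finset.sup_le fun p _ => ?_)
    refine (MvPolynomial.totalDegree_smul_le _ _).trans ?_
    refine (MvPolynomial.totalDegree_finset_prod _ _).trans ?_
    refine le_trans (Finset.sum_le_sum (fun i (_ : i ∈ Finset.univ) => hentry (p i) i)) ?_
    simp
  -- the grid of admissible values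
  set s : Finset (RatFunc K) :=
    (Finset.Icc (0 : ℤ) (r : ℤ)).image (fun z : ℤ => (z : RatFunc K)) with hsdef
  have hscard : s.card = r + 1 := by
    rw [hsdef, Finset.card_image_of_injective _ (fun z w h => by exact_mod_cast h),
      Int.card_Icc]
    omega
  obtain ⟨x, hxs, hxD⟩ := grid_prod s r D hD0
    (fun v => by rw [hscard]; exact Nat.lt_succ_of_le (hdeg v))
  have hxint : ∀ p : Fin r × Fin r,
      ∃ z : ℤ, (0 ≤ z ∧ z ≤ (r : ℤ)) ∧ (z : RatFunc K) = x p := by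
    intro p
    obtain ⟨z, hz, hzx⟩ := Finset.mem_image.mp (hxs p)
    exact ⟨z, Finset.mem_Icc.mp hz, hzx⟩
  choose c hc1 hc2 using hxint
  -- the integer polynomials
  set a : Fin r → Polynomial ℤ :=
    fun i => ∑ k : Fin r, Polynomial.C (c (i, k)) * Polynomial.X ^ (k : ℕ) with hadef
  have hacoeff : ∀ i m, (a i).coeff m = if h : m < r then c (i, ⟨m, h⟩) else 0 := by
    intro i m
    rw [hadef]
    rw [Polynomial.finset_sum_coeff]
    simp only [Polynomial.coeff_C_mul, Polynomial.coeff_X_pow]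
    split
    · next h =>
      rw [Finset.sum_eq_single (⟨m, h⟩ : Fin r)]
      · simp
      · intro k _ hk
        rw [if_neg, mul_zero]
        exact fun hkm => hk (Fin.ext hkm.symm)
      · intro habs; exact absurd (Finset.mem_univ _) habs
    · next h =>
      refine Finset.sum_eq_zero fun k _ => ?_
      rw [if_neg, mul_zero]
      intro hkm
      exact h (by rw [hkm]; exact k.isLt)
  refine ⟨a, ?_, ?_, ?_⟩
  · intro i
    rw [hadef]
    refine Polynomial.natDegree_sum_le_of_forall_le _ _ fun k _ => ?_
    refine (Polynomial.natDegree_C_mul_X_pow_le _ _).trans ?_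
    have := k.isLt
    omega
  · intro i m
    rw [Set.mem_Icc, hacoeff]
    split
    · next h => exact hc1 (i, ⟨m, h⟩)
    · next => exact ⟨le_refl 0, Int.natCast_nonneg r⟩
  · set f : Fin r → RatFunc K := fun i =>
      algebraMap (Polynomial K) (RatFunc K) ((a i).map (Int.castRingHom K)) with hfdef
    refine ⟨∑ i, f i • e i, rfl, ?_⟩
    have hfi : ∀ (j : ℕ) (i : Fin r),
        (σ ^ j : RatFunc K ≃ₐ[K] RatFunc K) (f i)
          = ∑ k : Fin r, (RatFunc.X + (j : RatFunc K)) ^ (k : ℕ) * x (i, k) := by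
      intro j i
      have h1 : f i = Polynomial.aeval RatFunc.X ((a i).map (Int.castRingHom K)) := by
        rw [hfdef]
        have h2 := Polynomial.aeval_algHom_apply
          (IsScalarTower.toAlgHom K (Polynomial K) (RatFunc K))
          Polynomial.X ((a i).map (Int.castRingHom K))
        simp only [Polynomial.aeval_X_left_apply, IsScalarTower.coe_toAlgHom',
          RatFunc.algebraMap_X] at h2
        exact h2.symm
      rw [h1, sigma_pow_aeval σ hσ, hadef]
      simp only [Polynomial.map_sum, Polynomial.map_mul, Polynomial.map_C, Polynomial.map_pow,
        Polynomial.map_X, map_sum, _root_.map_mul, Polynomial.aeval_C, map_pow,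
        Polynomial.aeval_X]
      refine Finset.sum_congr rfl fun k _ => ?_
      have h3 : (algebraMap K (RatFunc K)) ((Int.castRingHom K) (c (i, k))) = x (i, k) := by
        rw [eq_intCast, map_intCast, hc2]
      rw [h3, mul_comm]
    set M : Matrix (Fin r) (Fin r) (RatFunc K) :=
      Matrix.of fun j l : Fin r =>
        ∑ i, (∑ k, V j k * x (i, k)) * Amat σ A0 (j : ℕ) i l with hMdef
    have hrepr : ∀ j : Fin r, S^[(j : ℕ)] (∑ i, f i • e i) = ∑ l, M j l • e l := by
      intro j
      rw [iter_formula σ A0 S hS_add hS_smul e hA0 (j : ℕ) f]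
      refine Finset.sum_congr rfl fun l _ => ?_
      congr 1
      rw [hMdef]
      simp only [Matrix.of_apply]
      refine Finset.sum_congr rfl fun i _ => ?_
      congr 1
      rw [hfi (j : ℕ) i]
      refine Finset.sum_congr rfl fun k _ => ?_
      rw [hVdef]
      rfl
    have hunit : IsUnit (e.det fun j : Fin r => S^[(j : ℕ)] (∑ i, f i • e i)) := by
      rw [Module.Basis.det_apply]
      have hMt : e.toMatrix (fun j : Fin r => S^[(j : ℕ)] (∑ i, f i • e i)) = Mᵀ := by
        ext l j
        rw [Module.Basis.toMatrix_apply, hrepr j]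
        have h4 := e.repr_sum_self (fun l => M j l)
        rw [h4]
        rfl
      rw [hMt, Matrix.det_transpose, isUnit_iff_ne_zero]
      have h5 : MvPolynomial.eval x D = M.det := by rw [hevalD x, hMdef]
      rw [← h5]
      exact hxD
    exact (Module.Basis.is_basis_iff_det (v := fun j : Fin r => S^[(j : ℕ)] (∑ i, f i • e i)) e).mpr hunit
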